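/- arXiv:1405.5843 — 3 statements merged into one kernel-verified Lean document; each statement's English description precedes it below -/
import Mathlib

section
/- If the system (q,P) with invariant measure density N(q) satisfying (1/N)∂N/∂q₁ = A₂ and (1/N)∂N/∂q₂ = −A₁ is rewritten in the variables pᵢ = N(q)Pᵢ, then the equations of motion take the conformally Hamiltonian form q̇ᵢ = N(q){qᵢ, H̄}, ṗᵢ = N(q){pᵢ, H̄}, where H̄(q,p) = H(q, p/N(q)) and the bracket is {qᵢ,pⱼ} = δᵢⱼ, {q₁,q₂} = 0, {p₁,p₂} = N(q)B(q). -/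
/-- Partial derivative of a function of `(q, y)` on ℝ² × ℝ² with respect to `qᵢ`. -/
noncomputable def dq (F : (Fin 2 → ℝ) × (Fin 2 → ℝ) → ℝ) (i : Fin 2)
    (x : (Fin 2 → ℝ) × (Fin 2 → ℝ)) : ℝ :=
  fderiv ℝ F x (Pi.single i 1, 0)

/-- Partial derivative of a function of `(q, y)` on ℝ² × ℝ² with respect to the
second group of variables `yᵢ`. -/
noncomputable def dy (F : (Fin 2 → ℝ) × (Fin 2 → ℝ) → ℝ) (i : Fin 2)
    (x : (Fin 2 → ℝ) × (Fin 2 → ℝ)) : ℝ :=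
  fderiv ℝ F x (0, Pi.single i 1)

open ContinuousLinearMap

lemma vec_decomp (v : Fin 2 → ℝ) :
    v = v 0 • (Pi.single 0 1 : Fin 2 → ℝ) + v 1 • (Pi.single 1 1 : Fin 2 → ℝ) := by
  funext j; fin_cases j <;> simp

lemma map_pair_snd (L : ((Fin 2 → ℝ) × (Fin 2 → ℝ)) →L[ℝ] ℝ) (v : Fin 2 → ℝ) :
    L (0, v) = v 0 * L (0, Pi.single 0 1) + v 1 * L (0, Pi.single 1 1) := by
  have h : ((0, v) : (Fin 2 → ℝ) × (Fin 2 → ℝ))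
      = v 0 • ((0 : Fin 2 → ℝ), (Pi.single 0 1 : Fin 2 → ℝ)) + v 1 • (0, Pi.single 1 1) := by
    refine Prod.ext ?_ ?_
    · simp
    · simpa using vec_decomp v
  rw [h, L.map_add, L.map_smul, L.map_smul]; ring_nf

lemma map_pair_split (L : ((Fin 2 → ℝ) × (Fin 2 → ℝ)) →L[ℝ] ℝ) (u v : Fin 2 → ℝ) :
    L (u, v) = L (u, 0) + L (0, v) := by
  rw [← L.map_add]; simp

/-- if the generalised Chaplygin system in Hamiltonian form admits an
invariant measure with density N(q) (equivalently, (1/N)∂N/∂q₁ = A₂ and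
(1/N)∂N/∂q₂ = −A₁), then in the rescaled momenta pᵢ = N(q)Pᵢ the equations of motion
take the conformally Hamiltonian form q̇ = N(q){q, H̄}, ṗ = N(q){p, H̄} with the
bracket {qᵢ,pⱼ} = δᵢⱼ, {q₁,q₂} = 0, {p₁,p₂} = N(q)B(q), where H̄(q,p) = H(q, p/N(q)). -/
theorem statement3
    (H : (Fin 2 → ℝ) × (Fin 2 → ℝ) → ℝ) (hH : ContDiff ℝ (⊤ : ℕ∞) H)
    (A₁ A₂ B : (Fin 2 → ℝ) → ℝ)
    (hA₁ : ContDiff ℝ (⊤ : ℕ∞) A₁) (hA₂ : ContDiff ℝ (⊤ : ℕ∞) A₂) (hB : ContDiff ℝ (⊤ : ℕ∞) B)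
    (N : (Fin 2 → ℝ) → ℝ) (hN : ContDiff ℝ (⊤ : ℕ∞) N) (hNpos : ∀ q, 0 < N q)
    -- the measure conditions (1/N)∂N/∂q₁ = A₂, (1/N)∂N/∂q₂ = −A₁
    (hmeas1 : ∀ q, fderiv ℝ N q (Pi.single 0 1) = N q * A₂ q)
    (hmeas2 : ∀ q, fderiv ℝ N q (Pi.single 1 1) = -(N q * A₁ q))
    -- the function S, affine in the momenta P
    (S : (Fin 2 → ℝ) × (Fin 2 → ℝ) → ℝ)
    (hS : ∀ x, S x = A₁ x.1 * x.2 0 + A₂ x.1 * x.2 1 + B x.1)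
    -- a solution (q(t), P(t)) of the system
    (q P : ℝ → (Fin 2 → ℝ))
    (hq : ∀ t, HasDerivAt q ![dy H 0 (q t, P t), dy H 1 (q t, P t)] t)
    (hP : ∀ t, HasDerivAt P
      ![-(dq H 0 (q t, P t)) + dy H 1 (q t, P t) * S (q t, P t),
        -(dq H 1 (q t, P t)) - dy H 0 (q t, P t) * S (q t, P t)] t)
    -- the Hamiltonian in the new variables p = N(q)P
    (Hbar : (Fin 2 → ℝ) × (Fin 2 → ℝ) → ℝ)
    (hHbar : ∀ x, Hbar x = H (x.1, (N x.1)⁻¹ • x.2))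
    -- the rescaled momenta
    (p : ℝ → (Fin 2 → ℝ)) (hp : ∀ t, p t = N (q t) • P t) :
    -- conformally Hamiltonian form: q̇ᵢ = N{qᵢ,H̄}, ṗᵢ = N{pᵢ,H̄}
    (∀ t, HasDerivAt q
      ![N (q t) * dy Hbar 0 (q t, p t), N (q t) * dy Hbar 1 (q t, p t)] t) ∧
    (∀ t, HasDerivAt p
      ![N (q t) * (-(dq Hbar 0 (q t, p t)) + N (q t) * B (q t) * dy Hbar 1 (q t, p t)),
        N (q t) * (-(dq Hbar 1 (q t, p t)) - N (q t) * B (q t) * dy Hbar 0 (q t, p t))] t) := by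
  have hNne : ∀ y, N y ≠ 0 := fun y => (hNpos y).ne'
  have hHbarfun : Hbar = fun x => H (x.1, (N x.1)⁻¹ • x.2) := funext hHbar
  -- derivative of Hbar at an arbitrary point
  have key : ∀ x : (Fin 2 → ℝ) × (Fin 2 → ℝ),
      (∀ i, dy Hbar i x = (N x.1)⁻¹ * dy H i (x.1, (N x.1)⁻¹ • x.2)) ∧
      (∀ i, dq Hbar i x = dq H i (x.1, (N x.1)⁻¹ • x.2)
        - (N x.1)⁻¹ * fderiv ℝ N x.1 (Pi.single i 1) * ((N x.1)⁻¹ *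
          (x.2 0 * dy H 0 (x.1, (N x.1)⁻¹ • x.2) + x.2 1 * dy H 1 (x.1, (N x.1)⁻¹ • x.2)))) := by
    intro x
    set Φ : (Fin 2 → ℝ) × (Fin 2 → ℝ) → (Fin 2 → ℝ) × (Fin 2 → ℝ) :=
      fun y => (y.1, (N y.1)⁻¹ • y.2) with hΦdef
    have hNfst : HasFDerivAt (fun y : (Fin 2 → ℝ) × (Fin 2 → ℝ) => N y.1)
        ((fderiv ℝ N x.1).comp (fst ℝ (Fin 2 → ℝ) (Fin 2 → ℝ))) x :=
      ((hN.differentiable (by simp) x.1).hasFDerivAt).comp x (hasFDerivAt_fst)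
    have hc : HasFDerivAt (fun y : (Fin 2 → ℝ) × (Fin 2 → ℝ) => (N y.1)⁻¹)
        ((-mulLeftRight ℝ ℝ (N x.1)⁻¹ (N x.1)⁻¹).comp
          ((fderiv ℝ N x.1).comp (fst ℝ (Fin 2 → ℝ) (Fin 2 → ℝ)))) x :=
      (hasFDerivAt_inv' (hNne x.1)).comp x hNfst
    have hg : HasFDerivAt (fun y : (Fin 2 → ℝ) × (Fin 2 → ℝ) => (N y.1)⁻¹ • y.2)
        ((N x.1)⁻¹ • (snd ℝ (Fin 2 → ℝ) (Fin 2 → ℝ)) +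
          (((-mulLeftRight ℝ ℝ (N x.1)⁻¹ (N x.1)⁻¹).comp
            ((fderiv ℝ N x.1).comp (fst ℝ (Fin 2 → ℝ) (Fin 2 → ℝ)))).smulRight x.2)) x :=
      hc.smul hasFDerivAt_snd
    have hΦ : HasFDerivAt Φ
        ((fst ℝ (Fin 2 → ℝ) (Fin 2 → ℝ)).prod
          ((N x.1)⁻¹ • (snd ℝ (Fin 2 → ℝ) (Fin 2 → ℝ)) +
          (((-mulLeftRight ℝ ℝ (N x.1)⁻¹ (N x.1)⁻¹).comp
            ((fderiv ℝ N x.1).comp (fst ℝ (Fin 2 → ℝ) (Fin 2 → ℝ)))).smulRight x.2))) x :=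
      hasFDerivAt_fst.prodMk hg
    have hHd : HasFDerivAt H (fderiv ℝ H (Φ x)) (Φ x) :=
      (hH.differentiable (by simp) (Φ x)).hasFDerivAt
    have hcomp : HasFDerivAt Hbar ((fderiv ℝ H (Φ x)).comp
        ((fst ℝ (Fin 2 → ℝ) (Fin 2 → ℝ)).prod
          ((N x.1)⁻¹ • (snd ℝ (Fin 2 → ℝ) (Fin 2 → ℝ)) +
          (((-mulLeftRight ℝ ℝ (N x.1)⁻¹ (N x.1)⁻¹).comp
            ((fderiv ℝ N x.1).comp (fst ℝ (Fin 2 → ℝ) (Fin 2 → ℝ)))).smulRight x.2)))) x := by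
      rw [hHbarfun]
      exact hHd.comp x hΦ
    have hfd := hcomp.fderiv
    constructor
    · intro i
      rw [dy, hfd]
      simp only [coe_comp', Function.comp_apply, prod_apply, coe_fst', add_apply,
        coe_smul', Pi.smul_apply, coe_snd', smulRight_apply, neg_apply, mulLeftRight_apply]
      rw [show (fderiv ℝ N x.1) ((0 : Fin 2 → ℝ)) = 0 from (fderiv ℝ N x.1).map_zero]
      simp only [mul_zero, zero_mul, neg_zero, zero_smul, add_zero]
      rw [show ((0 : Fin 2 → ℝ), (N x.1)⁻¹ • (Pi.single i 1 : Fin 2 → ℝ))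
          = (N x.1)⁻¹ • ((0 : Fin 2 → ℝ), (Pi.single i 1 : Fin 2 → ℝ)) by
        refine Prod.ext ?_ rfl; simp]
      rw [(fderiv ℝ H (Φ x)).map_smul]
      rfl
    · intro i
      rw [dq, hfd]
      simp only [coe_comp', Function.comp_apply, prod_apply, coe_fst', add_apply,
        coe_smul', Pi.smul_apply, coe_snd', smulRight_apply, neg_apply, mulLeftRight_apply]
      rw [map_pair_split]
      have h2 : ((N x.1)⁻¹ • (0 : Fin 2 → ℝ) +
          (-((N x.1)⁻¹ * fderiv ℝ N x.1 (Pi.single i 1) * (N x.1)⁻¹)) • x.2)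
          = (-((N x.1)⁻¹ * fderiv ℝ N x.1 (Pi.single i 1) * (N x.1)⁻¹)) • x.2 := by
        simp
      rw [h2]
      rw [show ((0 : Fin 2 → ℝ), (-((N x.1)⁻¹ * fderiv ℝ N x.1 (Pi.single i 1) * (N x.1)⁻¹)) • x.2)
          = (-((N x.1)⁻¹ * fderiv ℝ N x.1 (Pi.single i 1) * (N x.1)⁻¹)) •
            ((0 : Fin 2 → ℝ), x.2) by
        refine Prod.ext ?_ rfl; simp]
      rw [(fderiv ℝ H (Φ x)).map_smul, map_pair_snd]
      have : dq H i (Φ x) = (fderiv ℝ H (Φ x)) (Pi.single i 1, 0) := rfl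
      rw [smul_eq_mul]
      rw [show Φ x = (x.1, (N x.1)⁻¹ • x.2) from rfl]
      rw [← dq, ← dy, ← dy]
      ring
  -- value of Φ on a solution point
  have hpt : ∀ t, ((q t, p t).1, (N (q t, p t).1)⁻¹ • (q t, p t).2) = (q t, P t) := by
    intro t
    refine Prod.ext rfl ?_
    simp only [hp t]
    rw [smul_smul, inv_mul_cancel₀ (hNne (q t)), one_smul]
  have hdy : ∀ t i, dy Hbar i (q t, p t) = (N (q t))⁻¹ * dy H i (q t, P t) := by
    intro t i
    have := (key (q t, p t)).1 i
    rw [this]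
    congr 1
    rw [show ((q t, p t).1, (N (q t, p t).1)⁻¹ • (q t, p t).2) = (q t, P t) from hpt t]
  have hdq : ∀ t i, dq Hbar i (q t, p t) = dq H i (q t, P t)
      - (N (q t))⁻¹ * fderiv ℝ N (q t) (Pi.single i 1) *
        (P t 0 * dy H 0 (q t, P t) + P t 1 * dy H 1 (q t, P t)) := by
    intro t i
    have hk := (key (q t, p t)).2 i
    rw [hk]
    have e1 : ((q t, p t).1, (N (q t, p t).1)⁻¹ • (q t, p t).2) = (q t, P t) := hpt t
    rw [e1]
    have e2 : ((q t, p t).2 : Fin 2 → ℝ) = N (q t) • P t := hp t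
    congr 1
    rw [e2]
    simp only [Pi.smul_apply, smul_eq_mul]
    field_simp [hNne (q t)]
  constructor
  · intro t
    have := hq t
    convert this using 1
    funext j
    fin_cases j <;>
      simp [hdy t, mul_comm, mul_left_comm, mul_assoc, hNne (q t),
        mul_inv_cancel₀ (hNne (q t))] <;>
      field_simp
  · intro t
    -- derivative of p t = N (q t) • P t
    have hpfun : p = fun t => N (q t) • P t := funext hp
    have hNq : HasDerivAt (fun t => N (q t))
        (fderiv ℝ N (q t) ![dy H 0 (q t, P t), dy H 1 (q t, P t)]) t :=
      ((hN.differentiable (by simp) (q t)).hasFDerivAt).comp_hasDerivAt t (hq t)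
    have hps : HasDerivAt p
        (N (q t) • ![-(dq H 0 (q t, P t)) + dy H 1 (q t, P t) * S (q t, P t),
          -(dq H 1 (q t, P t)) - dy H 0 (q t, P t) * S (q t, P t)] +
         (fderiv ℝ N (q t) ![dy H 0 (q t, P t), dy H 1 (q t, P t)]) • P t) t := by
      rw [hpfun]
      exact hNq.smul (hP t)
    convert hps using 1
    -- compute fderiv N (q t) applied to the velocity vector
    have hNv : fderiv ℝ N (q t) ![dy H 0 (q t, P t), dy H 1 (q t, P t)]
        = dy H 0 (q t, P t) * (N (q t) * A₂ (q t))
          + dy H 1 (q t, P t) * (-(N (q t) * A₁ (q t))) := by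
      rw [show (![dy H 0 (q t, P t), dy H 1 (q t, P t)] : Fin 2 → ℝ)
          = dy H 0 (q t, P t) • (Pi.single 0 1 : Fin 2 → ℝ) + dy H 1 (q t, P t) • (Pi.single 1 1 : Fin 2 → ℝ) by
        funext j; fin_cases j <;> simp]
      rw [(fderiv ℝ N (q t)).map_add, (fderiv ℝ N (q t)).map_smul, (fderiv ℝ N (q t)).map_smul,
        hmeas1, hmeas2]
      simp [smul_eq_mul]
    funext j
    have hm1 := hmeas1 (q t)
    have hm2 := hmeas2 (q t)
    fin_cases j <;>
    · simp only [Fin.zero_eta, Fin.mk_one, Matrix.cons_val_zero, Matrix.cons_val_one, Matrix.head_cons,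
        Pi.add_apply, Pi.smul_apply, smul_eq_mul, hNv, hdq t, hdy t, hS, hm1, hm2]
      field_simp [hNne (q t)]
      ring
end

section
/- Consider the vector field V on ℝ⁶ given by Ṁ = (M − Sγ) × ∂H/∂M + γ × ∂H/∂γ, γ̇ = γ × ∂H/∂M with S = K(γ)·M, K : ℝ³ → ℝ³ smooth. If ρ(γ) > 0 is a smooth density such that ρ(γ)dM dγ is an invariant measure, i.e., div(ρV) = 0 for all H quadratic and nondegenerate in M, then ((1/ρ)∂ρ/∂γ − K(γ)) × γ = 0. -/
open Matrix

/-- Gradient of `H(M,γ)` with respect to the first (`M`) argument. -/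
noncomputable def gradM (H : (Fin 3 → ℝ) × (Fin 3 → ℝ) → ℝ)
    (x : (Fin 3 → ℝ) × (Fin 3 → ℝ)) : Fin 3 → ℝ :=
  fun i => fderiv ℝ H x (Pi.single i 1, 0)

/-- Gradient of `H(M,γ)` with respect to the second (`γ`) argument. -/
noncomputable def gradG (H : (Fin 3 → ℝ) × (Fin 3 → ℝ) → ℝ)
    (x : (Fin 3 → ℝ) × (Fin 3 → ℝ)) : Fin 3 → ℝ :=
  fun i => fderiv ℝ H x (0, Pi.single i 1)

/-- Gradient of a function of `γ ∈ ℝ³`. -/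
noncomputable def grad3 (ρ : (Fin 3 → ℝ) → ℝ) (γ : Fin 3 → ℝ) : Fin 3 → ℝ :=
  fun i => fderiv ℝ ρ γ (Pi.single i 1)

/-- The `M`-component of the vector field V: Ṁ = (M − Sγ) × ∂H/∂M + γ × ∂H/∂γ,
with S = K(γ)·M. -/
noncomputable def VM (K : (Fin 3 → ℝ) → (Fin 3 → ℝ))
    (H : (Fin 3 → ℝ) × (Fin 3 → ℝ) → ℝ) (x : (Fin 3 → ℝ) × (Fin 3 → ℝ)) : Fin 3 → ℝ :=
  crossProduct (x.1 - (K x.2 ⬝ᵥ x.1) • x.2) (gradM H x) + crossProduct x.2 (gradG H x)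

/-- The `γ`-component of the vector field V: γ̇ = γ × ∂H/∂M. -/
noncomputable def VG (H : (Fin 3 → ℝ) × (Fin 3 → ℝ) → ℝ)
    (x : (Fin 3 → ℝ) × (Fin 3 → ℝ)) : Fin 3 → ℝ :=
  crossProduct x.2 (gradM H x)

/- ====== auxiliary lemmas ====== -/


lemma lin_deriv (p q : ℝ) : HasDerivAt (fun t : ℝ => p + q * t) q 0 := by
  simpa using ((hasDerivAt_id (0:ℝ)).const_mul q).const_add p

lemma quad_deriv (p q r : ℝ) : HasDerivAt (fun t : ℝ => p + q * t + r * t ^ 2) q 0 := by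
  have h1 : HasDerivAt (fun t : ℝ => t ^ 2) (0:ℝ) 0 := by
    simpa using (hasDerivAt_pow 2 (0:ℝ))
  have h2 := (lin_deriv p q).add (h1.const_mul r)
  rw [mul_zero, add_zero] at h2
  exact h2

lemma hasDerivAt_affine {f : ℝ → ℝ} {q : ℝ} (h : ∀ t, f t = f 0 + q * t) :
    HasDerivAt f q 0 :=
  (lin_deriv (f 0) q).congr_of_eventuallyEq (Filter.Eventually.of_forall h)

lemma fderiv_line {E : Type*} [NormedAddCommGroup E] [NormedSpace ℝ E]
    {f : E → ℝ} {x v : E} {d : ℝ}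
    (hf : DifferentiableAt ℝ f x) (h : HasDerivAt (fun t : ℝ => f (x + t • v)) d 0) :
    fderiv ℝ f x v = d := by
  have hline : HasDerivAt (fun t : ℝ => x + t • v) v 0 := by
    simpa using ((hasDerivAt_id (0:ℝ)).smul_const v).const_add x
  have hf' : HasFDerivAt f (fderiv ℝ f x) (x + (0:ℝ) • v) := by
    simpa using hf.hasFDerivAt
  exact (hf'.comp_hasDerivAt (x := (0:ℝ)) hline).unique h

noncomputable def Ham : (Fin 3 → ℝ) × (Fin 3 → ℝ) → ℝ := fun x => (1/2) * (x.1 ⬝ᵥ x.1)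

lemma Ham_diff : Differentiable ℝ Ham := by
  unfold Ham
  simp only [dotProduct, Fin.sum_univ_three]
  fun_prop

lemma gradG_Ham (x) : gradG Ham x = 0 := by
  funext i
  show fderiv ℝ Ham x (0, Pi.single i 1) = 0
  apply fderiv_line (Ham_diff x)
  have : (fun t : ℝ => Ham (x + t • (((0 : Fin 3 → ℝ), (Pi.single i 1 : Fin 3 → ℝ)) :
      (Fin 3 → ℝ) × (Fin 3 → ℝ)))) = fun _ => Ham x := by
    funext t
    simp [Ham]
  rw [this]
  simpa using hasDerivAt_const (0:ℝ) (Ham x)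

lemma gradM_Ham (x) : gradM Ham x = x.1 := by
  funext i
  show fderiv ℝ Ham x (Pi.single i 1, 0) = x.1 i
  have key : fderiv ℝ Ham x (Pi.single i 1, 0) = x.1 ⬝ᵥ Pi.single i 1 := by
    apply fderiv_line (Ham_diff x)
    have hfun : (fun t : ℝ => Ham (x + t • ((Pi.single i 1 : Fin 3 → ℝ), (0 : Fin 3 → ℝ))))
        = fun t => Ham x + (x.1 ⬝ᵥ Pi.single i 1) * t
            + ((1/2) * (Pi.single i 1 ⬝ᵥ Pi.single i 1)) * t ^ 2 := by
      funext t
      simp only [Ham, dotProduct, Fin.sum_univ_three, Prod.fst_add, Prod.smul_fst,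
        Pi.add_apply, Pi.smul_apply, smul_eq_mul]
      ring
    rw [hfun]
    exact quad_deriv _ _ _
  simpa using key


/-- if ρ(γ) > 0 is a smooth density such that ρ(γ)dM dγ is an invariant
measure, i.e., div(ρV) = 0, for all Hamiltonians H quadratic and nondegenerate in M,
then ((1/ρ)∂ρ/∂γ − K(γ)) × γ = 0. -/
theorem statement5
    (K : (Fin 3 → ℝ) → (Fin 3 → ℝ)) (hK : ContDiff ℝ (⊤ : ℕ∞) K)
    (ρ : (Fin 3 → ℝ) → ℝ) (hρ : ContDiff ℝ (⊤ : ℕ∞) ρ) (hρpos : ∀ γ, 0 < ρ γ)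
    -- div(ρV) = 0 for every Hamiltonian quadratic and nondegenerate in M
    (hdiv : ∀ (G : (Fin 3 → ℝ) → Matrix (Fin 3) (Fin 3) ℝ) (U : (Fin 3 → ℝ) → ℝ),
      (∀ i j, ContDiff ℝ (⊤ : ℕ∞) (fun γ => G γ i j)) → ContDiff ℝ (⊤ : ℕ∞) U →
      (∀ γ, (G γ).IsSymm) → (∀ γ, (G γ).det ≠ 0) →
      ∀ (H : (Fin 3 → ℝ) × (Fin 3 → ℝ) → ℝ),
        (∀ x, H x = (1 / 2) * (x.1 ⬝ᵥ (G x.2).mulVec x.1) + U x.2) →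
        ∀ x : (Fin 3 → ℝ) × (Fin 3 → ℝ),
          (∑ i, fderiv ℝ (fun y => ρ y.2 * VM K H y i) x (Pi.single i 1, 0))
          + (∑ i, fderiv ℝ (fun y => ρ y.2 * VG H y i) x (0, Pi.single i 1)) = 0) :
    ∀ γ : Fin 3 → ℝ,
      crossProduct ((ρ γ)⁻¹ • grad3 ρ γ - K γ) γ = 0 := by
  intro γ
  have hKd : ∀ j, Differentiable ℝ (fun γ : Fin 3 → ℝ => K γ j) := fun j =>
    differentiable_pi.mp (hK.differentiable (by simp)) j
  have hρd : Differentiable ℝ ρ := hρ.differentiable (by simp)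
  have Hd := hdiv (fun _ => 1) (fun _ => 0) (fun i j => by simpa using contDiff_const)
    contDiff_const (fun _ => Matrix.isSymm_one) (fun _ => by simp) Ham
    (fun x => by simp [Ham, Matrix.one_mulVec])
  have hrwM : ∀ i : Fin 3, (fun y : (Fin 3 → ℝ) × (Fin 3 → ℝ) => ρ y.2 * VM K Ham y i)
      = fun y => ρ y.2 * (-((K y.2 ⬝ᵥ y.1) * crossProduct y.2 y.1 i)) := by
    intro i
    funext y
    have : VM K Ham y = -((K y.2 ⬝ᵥ y.1) • crossProduct y.2 y.1) := by
      unfold VM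
      rw [gradM_Ham, gradG_Ham]
      simp [map_sub, LinearMap.map_smul, cross_self]
    rw [this]
    simp [mul_comm]
  have hrwG : ∀ i : Fin 3, (fun y : (Fin 3 → ℝ) × (Fin 3 → ℝ) => ρ y.2 * VG Ham y i)
      = fun y => ρ y.2 * crossProduct y.2 y.1 i := by
    intro i
    funext y
    unfold VG
    rw [gradM_Ham]
  have hρline : ∀ (v : Fin 3 → ℝ),
      HasDerivAt (fun t : ℝ => ρ (γ + t • v)) (fderiv ℝ ρ γ v) 0 := by
    intro v
    have hline : HasDerivAt (fun t : ℝ => γ + t • v) v 0 := by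
      simpa using ((hasDerivAt_id (0:ℝ)).smul_const v).const_add γ
    have h' : HasFDerivAt ρ (fderiv ℝ ρ γ) (γ + (0:ℝ) • v) := by
      simpa using (hρd γ).hasFDerivAt
    exact h'.comp_hasDerivAt (x := (0:ℝ)) hline
  have hdiff1 : ∀ i : Fin 3, Differentiable ℝ
      (fun y : (Fin 3 → ℝ) × (Fin 3 → ℝ) =>
        ρ y.2 * (-((K y.2 ⬝ᵥ y.1) * crossProduct y.2 y.1 i))) := by
    intro i
    fin_cases i <;>
    · norm_num [dotProduct, Fin.sum_univ_three, crossProduct]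
      fun_prop
  have hdiff2 : ∀ i : Fin 3, Differentiable ℝ
      (fun y : (Fin 3 → ℝ) × (Fin 3 → ℝ) => ρ y.2 * crossProduct y.2 y.1 i) := by
    intro i
    fin_cases i <;>
    · norm_num [crossProduct]
      fun_prop
  have key : ∀ M : Fin 3 → ℝ,
      (grad3 ρ γ 0 - ρ γ * K γ 0) * (γ 1 * M 2 - γ 2 * M 1)
      + (grad3 ρ γ 1 - ρ γ * K γ 1) * (γ 2 * M 0 - γ 0 * M 2)
      + (grad3 ρ γ 2 - ρ γ * K γ 2) * (γ 0 * M 1 - γ 1 * M 0) = 0 := by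
    intro M
    have hA0 : fderiv ℝ (fun y : (Fin 3 → ℝ) × (Fin 3 → ℝ) =>
        ρ y.2 * (-((K y.2 ⬝ᵥ y.1) * crossProduct y.2 y.1 0))) (M, γ)
        (Pi.single 0 1, 0) = -(ρ γ * (K γ 0 * (γ 1 * M 2 - γ 2 * M 1))) := by
      refine fderiv_line ((hdiff1 0) (M, γ)) (hasDerivAt_affine ?_)
      intro t
      simp only [crossProduct, dotProduct, Fin.sum_univ_three, Prod.mk_add_mk, Prod.smul_mk,
        LinearMap.mk₂_apply, Pi.add_apply, Pi.smul_apply, smul_eq_mul, smul_zero, add_zero,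
        zero_smul, zero_mul, mul_zero, Pi.single_apply, Matrix.cons_val_zero, Matrix.cons_val_one,
        Matrix.head_cons, Matrix.cons_val_two, Matrix.tail_cons]
      norm_num [Fin.ext_iff]
      ring
    have hA1 : fderiv ℝ (fun y : (Fin 3 → ℝ) × (Fin 3 → ℝ) =>
        ρ y.2 * (-((K y.2 ⬝ᵥ y.1) * crossProduct y.2 y.1 1))) (M, γ)
        (Pi.single 1 1, 0) = -(ρ γ * (K γ 1 * (γ 2 * M 0 - γ 0 * M 2))) := by
      refine fderiv_line ((hdiff1 1) (M, γ)) (hasDerivAt_affine ?_)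
      intro t
      simp only [crossProduct, dotProduct, Fin.sum_univ_three, Prod.mk_add_mk, Prod.smul_mk,
        LinearMap.mk₂_apply, Pi.add_apply, Pi.smul_apply, smul_eq_mul, smul_zero, add_zero,
        zero_smul, zero_mul, mul_zero, Pi.single_apply, Matrix.cons_val_zero, Matrix.cons_val_one,
        Matrix.head_cons, Matrix.cons_val_two, Matrix.tail_cons]
      norm_num [Fin.ext_iff]
      ring
    have hA2 : fderiv ℝ (fun y : (Fin 3 → ℝ) × (Fin 3 → ℝ) =>
        ρ y.2 * (-((K y.2 ⬝ᵥ y.1) * crossProduct y.2 y.1 2))) (M, γ)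
        (Pi.single 2 1, 0) = -(ρ γ * (K γ 2 * (γ 0 * M 1 - γ 1 * M 0))) := by
      refine fderiv_line ((hdiff1 2) (M, γ)) (hasDerivAt_affine ?_)
      intro t
      simp only [crossProduct, dotProduct, Fin.sum_univ_three, Prod.mk_add_mk, Prod.smul_mk,
        LinearMap.mk₂_apply, Pi.add_apply, Pi.smul_apply, smul_eq_mul, smul_zero, add_zero,
        zero_smul, zero_mul, mul_zero, Pi.single_apply, Matrix.cons_val_zero, Matrix.cons_val_one,
        Matrix.head_cons, Matrix.cons_val_two, Matrix.tail_cons]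
      norm_num [Fin.ext_iff]
      ring
    have hB0 : fderiv ℝ (fun y : (Fin 3 → ℝ) × (Fin 3 → ℝ) =>
        ρ y.2 * crossProduct y.2 y.1 0) (M, γ) (0, Pi.single 0 1)
        = grad3 ρ γ 0 * (γ 1 * M 2 - γ 2 * M 1) := by
      refine fderiv_line ((hdiff2 0) (M, γ)) ?_
      have heq : (fun t : ℝ => (fun y : (Fin 3 → ℝ) × (Fin 3 → ℝ) =>
          ρ y.2 * crossProduct y.2 y.1 0) ((M, γ) + t • ((((0 : Fin 3 → ℝ), (Pi.single 0 1 : Fin 3 → ℝ))) : (Fin 3 → ℝ) × (Fin 3 → ℝ))))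
          = fun t => ρ (γ + t • Pi.single 0 1) * (γ 1 * M 2 - γ 2 * M 1) := by
        funext t
        simp only [crossProduct, Prod.mk_add_mk, Prod.smul_mk, LinearMap.mk₂_apply,
          Pi.add_apply, Pi.smul_apply, smul_eq_mul, smul_zero, add_zero, zero_smul, zero_mul,
          mul_zero, Pi.single_apply, Matrix.cons_val_zero, Matrix.cons_val_one, Matrix.head_cons,
          Matrix.cons_val_two, Matrix.tail_cons]
        norm_num [Fin.ext_iff]
      rw [heq]
      simpa [grad3] using (hρline (Pi.single 0 1)).mul_const (γ 1 * M 2 - γ 2 * M 1)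
    have hB1 : fderiv ℝ (fun y : (Fin 3 → ℝ) × (Fin 3 → ℝ) =>
        ρ y.2 * crossProduct y.2 y.1 1) (M, γ) (0, Pi.single 1 1)
        = grad3 ρ γ 1 * (γ 2 * M 0 - γ 0 * M 2) := by
      refine fderiv_line ((hdiff2 1) (M, γ)) ?_
      have heq : (fun t : ℝ => (fun y : (Fin 3 → ℝ) × (Fin 3 → ℝ) =>
          ρ y.2 * crossProduct y.2 y.1 1) ((M, γ) + t • ((((0 : Fin 3 → ℝ), (Pi.single 1 1 : Fin 3 → ℝ))) : (Fin 3 → ℝ) × (Fin 3 → ℝ))))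
          = fun t => ρ (γ + t • Pi.single 1 1) * (γ 2 * M 0 - γ 0 * M 2) := by
        funext t
        simp only [crossProduct, Prod.mk_add_mk, Prod.smul_mk, LinearMap.mk₂_apply,
          Pi.add_apply, Pi.smul_apply, smul_eq_mul, smul_zero, add_zero, zero_smul, zero_mul,
          mul_zero, Pi.single_apply, Matrix.cons_val_zero, Matrix.cons_val_one, Matrix.head_cons,
          Matrix.cons_val_two, Matrix.tail_cons]
        norm_num [Fin.ext_iff]
      rw [heq]
      simpa [grad3] using (hρline (Pi.single 1 1)).mul_const (γ 2 * M 0 - γ 0 * M 2)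
    have hB2 : fderiv ℝ (fun y : (Fin 3 → ℝ) × (Fin 3 → ℝ) =>
        ρ y.2 * crossProduct y.2 y.1 2) (M, γ) (0, Pi.single 2 1)
        = grad3 ρ γ 2 * (γ 0 * M 1 - γ 1 * M 0) := by
      refine fderiv_line ((hdiff2 2) (M, γ)) ?_
      have heq : (fun t : ℝ => (fun y : (Fin 3 → ℝ) × (Fin 3 → ℝ) =>
          ρ y.2 * crossProduct y.2 y.1 2) ((M, γ) + t • ((((0 : Fin 3 → ℝ), (Pi.single 2 1 : Fin 3 → ℝ))) : (Fin 3 → ℝ) × (Fin 3 → ℝ))))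
          = fun t => ρ (γ + t • Pi.single 2 1) * (γ 0 * M 1 - γ 1 * M 0) := by
        funext t
        simp only [crossProduct, Prod.mk_add_mk, Prod.smul_mk, LinearMap.mk₂_apply,
          Pi.add_apply, Pi.smul_apply, smul_eq_mul, smul_zero, add_zero, zero_smul, zero_mul,
          mul_zero, Pi.single_apply, Matrix.cons_val_zero, Matrix.cons_val_one, Matrix.head_cons,
          Matrix.cons_val_two, Matrix.tail_cons]
        norm_num [Fin.ext_iff]
      rw [heq]
      simpa [grad3] using (hρline (Pi.single 2 1)).mul_const (γ 0 * M 1 - γ 1 * M 0)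
    have this0 := Hd (M, γ)
    rw [Fin.sum_univ_three, Fin.sum_univ_three] at this0
    rw [hrwM 0, hrwM 1, hrwM 2, hrwG 0, hrwG 1, hrwG 2] at this0
    rw [hA0, hA1, hA2, hB0, hB1, hB2] at this0
    linarith [this0]
  have hne : ρ γ ≠ 0 := (hρpos γ).ne'
  funext j
  have k0 := key (Pi.single 0 1)
  have k1 := key (Pi.single 1 1)
  have k2 := key (Pi.single 2 1)
  simp only [Pi.single_apply] at k0 k1 k2
  norm_num [Fin.ext_iff] at k0 k1 k2
  fin_cases j <;>
  · simp only [crossProduct, LinearMap.mk₂_apply, Pi.sub_apply, Pi.smul_apply, smul_eq_mul,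
      Matrix.cons_val_zero, Matrix.cons_val_one, Matrix.head_cons, Matrix.cons_val_two,
      Matrix.tail_cons, Pi.zero_apply]
    norm_num [Fin.ext_iff]
    field_simp
    linarith [k0, k1, k2]
end

section
/- For the Poisson structure P = ρ⁻¹P₀ of the Chaplygin-type system on ℝ⁶(M,γ), the functions F₁ = γ·γ and F₂ = M·γ are Casimir functions: P(dF₁) = 0 and P(dF₂) = 0. -/
open Matrix

/-- The skew-symmetric 3×3 matrix `â` of a vector `a ∈ ℝ³`, with `â x = a × x`. -/
def hat (a : Fin 3 → ℝ) : Matrix (Fin 3) (Fin 3) ℝ :=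
  !![0, -a 2, a 1; a 2, 0, -a 0; -a 1, a 0, 0]

/-- Points of ℝ⁶ = ℝ³(M) × ℝ³(γ), indexed by `Fin 3 ⊕ Fin 3`. -/
abbrev R6 := (Fin 3 ⊕ Fin 3) → ℝ

/-- The bivector P₀ with block form [[M̂ − SΓ̂, Γ̂],[Γ̂, 0]], where S = K(γ)·M. -/
noncomputable def P0 (K : (Fin 3 → ℝ) → (Fin 3 → ℝ)) (x : R6) :
    Matrix (Fin 3 ⊕ Fin 3) (Fin 3 ⊕ Fin 3) ℝ :=
  Matrix.fromBlocks
    (hat (x ∘ Sum.inl) - (K (x ∘ Sum.inr) ⬝ᵥ (x ∘ Sum.inl)) • hat (x ∘ Sum.inr))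
    (hat (x ∘ Sum.inr)) (hat (x ∘ Sum.inr)) 0

/-- The gradient of a function on ℝ⁶. -/
noncomputable def grad6 (F : R6 → ℝ) (x : R6) : R6 :=
  fun l => fderiv ℝ F x (Pi.single l 1)

lemma grad_dot (f g : Fin 3 → Fin 3 ⊕ Fin 3) (x : R6) (l : Fin 3 ⊕ Fin 3) :
    grad6 (fun y => ∑ i : Fin 3, y (f i) * y (g i)) x l
      = ∑ i : Fin 3, (x (f i) * (Pi.single l 1 : R6) (g i)
          + x (g i) * (Pi.single l 1 : R6) (f i)) := by
  have h : HasFDerivAt (fun y : R6 => ∑ i : Fin 3, y (f i) * y (g i))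
      (∑ i : Fin 3, (x (f i) • (ContinuousLinearMap.proj (g i) : R6 →L[ℝ] ℝ)
          + x (g i) • (ContinuousLinearMap.proj (f i) : R6 →L[ℝ] ℝ))) x := by
    apply HasFDerivAt.fun_sum
    intro i _
    exact ((ContinuousLinearMap.proj (f i) : R6 →L[ℝ] ℝ).hasFDerivAt.mul
      ((ContinuousLinearMap.proj (g i) : R6 →L[ℝ] ℝ).hasFDerivAt))
  rw [grad6, h.fderiv]
  simp [ContinuousLinearMap.proj_apply, mul_comm]

/-- for the Poisson structure P = ρ⁻¹P₀ of the Chaplygin-type system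
on ℝ⁶(M,γ), the functions F₁ = γ·γ and F₂ = M·γ are Casimir functions:
P(dF₁) = 0 and P(dF₂) = 0. -/
theorem statement8
    (ρ : (Fin 3 → ℝ) → ℝ) (hρ : ContDiff ℝ (⊤ : ℕ∞) ρ) (hρpos : ∀ γ, 0 < ρ γ)
    (K : (Fin 3 → ℝ) → (Fin 3 → ℝ)) (hK : ContDiff ℝ (⊤ : ℕ∞) K)
    (P : R6 → Matrix (Fin 3 ⊕ Fin 3) (Fin 3 ⊕ Fin 3) ℝ)
    (hP : ∀ x, P x = (ρ (x ∘ Sum.inr))⁻¹ • P0 K x)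
    (F₁ F₂ : R6 → ℝ)
    (hF₁ : ∀ x, F₁ x = (x ∘ Sum.inr) ⬝ᵥ (x ∘ Sum.inr))
    (hF₂ : ∀ x, F₂ x = (x ∘ Sum.inl) ⬝ᵥ (x ∘ Sum.inr)) :
    ∀ x : R6, (P x).mulVec (grad6 F₁ x) = 0 ∧ (P x).mulVec (grad6 F₂ x) = 0 := by
  intro x
  have e1 : F₁ = fun y : R6 => ∑ i : Fin 3, y (Sum.inr i) * y (Sum.inr i) := by
    funext y; simp [hF₁, dotProduct, Function.comp]
  have e2 : F₂ = fun y : R6 => ∑ i : Fin 3, y (Sum.inl i) * y (Sum.inr i) := by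
    funext y; simp [hF₂, dotProduct, Function.comp]
  have g1 : ∀ l, grad6 F₁ x l = ∑ i : Fin 3,
      (x (Sum.inr i) * (Pi.single l 1 : R6) (Sum.inr i)
        + x (Sum.inr i) * (Pi.single l 1 : R6) (Sum.inr i)) := by
    intro l; rw [e1]; exact grad_dot Sum.inr Sum.inr x l
  have g2 : ∀ l, grad6 F₂ x l = ∑ i : Fin 3,
      (x (Sum.inl i) * (Pi.single l 1 : R6) (Sum.inr i)
        + x (Sum.inr i) * (Pi.single l 1 : R6) (Sum.inl i)) := by
    intro l; rw [e2]; exact grad_dot Sum.inl Sum.inr x l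
  constructor <;>
  · funext l
    rw [hP]
    simp only [Matrix.smul_mulVec, Pi.smul_apply, Pi.zero_apply, smul_eq_mul]
    rw [mul_eq_zero]
    right
    obtain l | l := l <;> fin_cases l <;>
    · simp [P0, mulVec, dotProduct, Fintype.sum_sum_type, Fin.sum_univ_three, g1, g2,
        Pi.single_apply, hat, Matrix.fromBlocks, Function.comp]
      try ring
end
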